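/- arXiv:1006.0151 — 6 statements merged into one kernel-verified Lean document; each statement's English description precedes it below -/
import Mathlib

section
/- For every n ≥ 1 and all Hermitian n×n complex matrices A and B, one has |log Tr e^A − log Tr e^B| ≤ ‖A − B‖, where e^M denotes the matrix exponential, Tr the trace, and ‖·‖ the operator norm. -/
/-!
In an eigenbasis `(uᵢ)` of `A` the diagonal of `A` is its spectrum `αᵢ`, and
`αᵢ = ⟪uᵢ, A uᵢ⟫ ≤ ⟪uᵢ, B uᵢ⟫ + ‖A - B‖`. Peierls' inequality (Jensen for the spectral
measure of `B` at each `uᵢ`) gives `∑ᵢ exp ⟪uᵢ, B uᵢ⟫ ≤ Tr e^B`, hence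
`Tr e^A = ∑ᵢ exp αᵢ ≤ e^{‖A - B‖} Tr e^B`. Taking logarithms and exchanging `A` and `B`
gives the claim.
-/

open scoped Matrix.Norms.L2Operator

namespace Matrix

variable {𝕜 m n : Type*} [RCLike 𝕜] [Fintype m] [Fintype n]

lemma norm_apply_le_l2_opNorm [DecidableEq n] (M : Matrix m n 𝕜) (i : m) (j : n) :
    ‖M i j‖ ≤ ‖M‖ := by
  have := M.l2_opNorm_mulVec (EuclideanSpace.single j 1)
  calc ‖M i j‖ = ‖(WithLp.toLp 2 (M *ᵥ Pi.single j 1)) i‖ := by simp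
    _ ≤ ‖WithLp.toLp 2 (M *ᵥ Pi.single j 1)‖ := PiLp.norm_apply_le _ _
    _ ≤ ‖M‖ := by simpa using this

variable [DecidableEq n]

lemma re_star_mul_mul_apply_self_le_l2_opNorm {U : Matrix n n 𝕜} (hU : U ∈ unitaryGroup n 𝕜)
    (C : Matrix n n 𝕜) (i : n) : RCLike.re ((star U * C * U) i i) ≤ ‖C‖ := by
  have hnorm : ‖star U * C * U‖ = ‖C‖ := by
    rw [CStarRing.norm_mul_mem_unitary _ hU,
      CStarRing.norm_mem_unitary_mul _ (Unitary.star_mem hU)]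
  exact (RCLike.re_le_norm _).trans ((norm_apply_le_l2_opNorm _ i i).trans hnorm.le)

lemma star_mul_diagonal_mul_apply_self (W : Matrix n n 𝕜) (d : n → ℝ) (i : n) :
    (star W * diagonal (RCLike.ofReal ∘ d) * W : Matrix n n 𝕜) i i =
      ∑ j, ((‖W j i‖ ^ 2 * d j : ℝ) : 𝕜) := by
  rw [mul_apply]
  refine Finset.sum_congr rfl fun j _ => ?_
  rw [mul_diagonal, star_apply, Function.comp_apply, mul_right_comm, RCLike.star_def,
    RCLike.conj_mul]
  push_cast
  ring

lemma sum_norm_sq_apply_eq_one {W : Matrix n n 𝕜} (hW : W ∈ unitaryGroup n 𝕜) (i : n) :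
    ∑ j, ‖W j i‖ ^ 2 = 1 := by
  have h := star_mul_diagonal_mul_apply_self W 1 i
  have hone : (RCLike.ofReal ∘ (1 : n → ℝ) : n → 𝕜) = 1 := by ext; simp
  rw [hone, diagonal_one', mul_one, mem_unitaryGroup_iff'.mp hW, one_apply_eq] at h
  simp only [Pi.one_apply, mul_one] at h
  exact_mod_cast h.symm

lemma trace_star_mul_mul_of_mem_unitaryGroup {U : Matrix n n 𝕜} (hU : U ∈ unitaryGroup n 𝕜)
    (M : Matrix n n 𝕜) : trace (star U * M * U) = trace M := by
  rw [trace_mul_cycle, mem_unitaryGroup_iff.mp hU, one_mul]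

namespace IsHermitian

variable {A B : Matrix n n 𝕜}

lemma re_star_mul_cfc_mul_apply_self (hB : B.IsHermitian) (f : ℝ → ℝ) (U : Matrix n n 𝕜)
    (i : n) :
    RCLike.re ((star U * cfc f B * U) i i) =
      ∑ j, ‖(star (hB.eigenvectorUnitary : Matrix n n 𝕜) * U) j i‖ ^ 2 *
        f (hB.eigenvalues j) := by
  set W : Matrix n n 𝕜 := star (hB.eigenvectorUnitary : Matrix n n 𝕜) * U
  have hconj : star U * cfc f B * U =
      star W * diagonal (RCLike.ofReal ∘ f ∘ hB.eigenvalues) * W := by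
    rw [hB.cfc_eq, IsHermitian.cfc, Unitary.conjStarAlgAut_apply, star_mul, star_star]
    simp only [W, mul_assoc]
  rw [hconj, star_mul_diagonal_mul_apply_self, ← RCLike.ofReal_sum, RCLike.ofReal_re]
  rfl

/-- Peierls' inequality. -/
theorem sum_map_re_star_mul_mul_apply_self_le (hB : B.IsHermitian) {f : ℝ → ℝ}
    (hf : ConvexOn ℝ Set.univ f) {U : Matrix n n 𝕜} (hU : U ∈ unitaryGroup n 𝕜) :
    ∑ i, f (RCLike.re ((star U * B * U) i i)) ≤ RCLike.re (trace (cfc f B)) := by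
  set W : Matrix n n 𝕜 := star (hB.eigenvectorUnitary : Matrix n n 𝕜) * U
  have hW : W ∈ unitaryGroup n 𝕜 := mul_mem (Unitary.star_mem hB.eigenvectorUnitary.2) hU
  have hdiag : ∀ i, RCLike.re ((star U * B * U) i i) = ∑ j, ‖W j i‖ ^ 2 * hB.eigenvalues j := by
    intro i
    conv_lhs => rw [← cfc_id' ℝ B]
    exact hB.re_star_mul_cfc_mul_apply_self _ U i
  calc ∑ i, f (RCLike.re ((star U * B * U) i i))
      ≤ ∑ i, ∑ j, ‖W j i‖ ^ 2 * f (hB.eigenvalues j) := by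
        refine Finset.sum_le_sum fun i _ => ?_
        rw [hdiag]
        exact hf.map_sum_le (fun j _ => sq_nonneg _) (sum_norm_sq_apply_eq_one hW i)
          (fun j _ => Set.mem_univ _)
    _ = RCLike.re (trace (cfc f B)) := by
        rw [← trace_star_mul_mul_of_mem_unitaryGroup hU, trace, map_sum]
        exact Finset.sum_congr rfl fun i _ => (hB.re_star_mul_cfc_mul_apply_self f U i).symm

lemma re_trace_cfc (hA : A.IsHermitian) (f : ℝ → ℝ) :
    RCLike.re (trace (cfc f A)) = ∑ i, f (hA.eigenvalues i) := by
  rw [hA.cfc_eq, IsHermitian.cfc, Unitary.conjStarAlgAut_apply, trace_mul_cycle,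
    Unitary.coe_star_mul_self, one_mul, trace_diagonal, map_sum]
  simp

lemma re_star_eigenvectorUnitary_mul_mul_apply_self (hA : A.IsHermitian) (i : n) :
    RCLike.re ((star (hA.eigenvectorUnitary : Matrix n n 𝕜) * A * hA.eigenvectorUnitary) i i) =
      hA.eigenvalues i := by
  have h := hA.conjStarAlgAut_star_eigenvectorUnitary
  rw [Unitary.conjStarAlgAut_apply, Unitary.coe_star, star_star] at h
  simp [h]

lemma re_trace_exp_eq_sum {A : Matrix n n ℂ} (hA : A.IsHermitian) :
    (trace (NormedSpace.exp A)).re = ∑ i, Real.exp (hA.eigenvalues i) := by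
  rw [← CFC.real_exp_eq_normedSpace_exp hA.isSelfAdjoint, ← RCLike.re_to_complex,
    hA.re_trace_cfc]

lemma re_trace_exp_pos [Nonempty n] {A : Matrix n n ℂ} (hA : A.IsHermitian) :
    0 < (trace (NormedSpace.exp A)).re := by
  rw [hA.re_trace_exp_eq_sum]
  exact Finset.sum_pos (fun i _ => Real.exp_pos _) Finset.univ_nonempty

theorem re_trace_exp_le_exp_norm_sub_mul {A B : Matrix n n ℂ} (hA : A.IsHermitian)
    (hB : B.IsHermitian) :
    (trace (NormedSpace.exp A)).re ≤ Real.exp ‖A - B‖ * (trace (NormedSpace.exp B)).re := by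
  set U : Matrix n n ℂ := (hA.eigenvectorUnitary : Matrix n n ℂ)
  have hα : ∀ i, hA.eigenvalues i ≤ RCLike.re ((star U * B * U) i i) + ‖A - B‖ := by
    intro i
    have h := re_star_mul_mul_apply_self_le_l2_opNorm hA.eigenvectorUnitary.2 (A - B) i
    rw [mul_sub, sub_mul, sub_apply, map_sub, hA.re_star_eigenvectorUnitary_mul_mul_apply_self]
      at h
    linarith
  calc (trace (NormedSpace.exp A)).re
      = ∑ i, Real.exp (hA.eigenvalues i) := hA.re_trace_exp_eq_sum
    _ ≤ ∑ i, Real.exp (RCLike.re ((star U * B * U) i i) + ‖A - B‖) :=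
        Finset.sum_le_sum fun i _ => Real.exp_le_exp.mpr (hα i)
    _ = Real.exp ‖A - B‖ * ∑ i, Real.exp (RCLike.re ((star U * B * U) i i)) := by
        simp only [Real.exp_add, Finset.mul_sum, mul_comm]
    _ ≤ Real.exp ‖A - B‖ * (trace (NormedSpace.exp B)).re := by
        rw [← CFC.real_exp_eq_normedSpace_exp hB.isSelfAdjoint]
        gcongr
        exact hB.sum_map_re_star_mul_mul_apply_self_le convexOn_exp hA.eigenvectorUnitary.2

end IsHermitian

end Matrix

lemma Real.abs_log_sub_log_le_of_le_exp_mul {x y t : ℝ} (hx : 0 < x) (hy : 0 < y)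
    (hxy : x ≤ Real.exp t * y) (hyx : y ≤ Real.exp t * x) : |Real.log x - Real.log y| ≤ t := by
  have log_le : ∀ {a b : ℝ}, 0 < a → 0 < b → a ≤ Real.exp t * b → Real.log a ≤ t + Real.log b :=
    fun ha hb hab => by
      rw [← Real.log_exp t, ← Real.log_mul (Real.exp_pos t).ne' hb.ne']
      exact Real.log_le_log ha hab
  rw [abs_sub_le_iff]
  constructor <;> linarith [log_le hx hy hxy, log_le hy hx hyx]

/-- For every `n ≥ 1` and all Hermitian `n × n` complex matrices `A` and `B`,
`|log Tr e^A − log Tr e^B| ≤ ‖A − B‖`, where the norm is the `ℓ²` operator norm.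
(Since `A`, `B` are Hermitian, the traces of their exponentials are positive reals,
so we express them via the real part.) -/
theorem abs_log_trace_exp_sub_log_trace_exp_le
    (n : ℕ) (hn : 1 ≤ n) (A B : Matrix (Fin n) (Fin n) ℂ)
    (hA : A.IsHermitian) (hB : B.IsHermitian) :
    |Real.log (Matrix.trace (NormedSpace.exp A)).re -
      Real.log (Matrix.trace (NormedSpace.exp B)).re| ≤ ‖A - B‖ := by
  have : Nonempty (Fin n) := ⟨⟨0, hn⟩⟩
  refine Real.abs_log_sub_log_le_of_le_exp_mul hA.re_trace_exp_pos hB.re_trace_exp_pos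
    (hA.re_trace_exp_le_exp_norm_sub_mul hB) ?_
  simpa only [norm_sub_rev] using hB.re_trace_exp_le_exp_norm_sub_mul hA
end

section
/- Let (f_n)_{n∈ℕ} be functions ℝ → ℝ, each Lipschitz with constant ≤ 1, converging pointwise to a function f. Then f is Lipschitz with constant ≤ 1, and the almost-everywhere derivatives converge to the almost-everywhere derivative of f in the weak-* sense: for every finite signed measure ν on ℝ absolutely continuous with respect to Lebesgue measure, lim_{n→∞} ∫ f_n′ dν = ∫ f′ dν, where f_n′ and f′ denote the (Lebesgue-a.e. defined) derivatives of f_n and f. -/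
/-!
The Lipschitz condition is closed under pointwise limits, so `flim` is `1`-Lipschitz. Since
`|f_n'| ≤ 1`, the functionals `u ↦ ∫ f_n' u` on `L¹` are uniformly Lipschitz, hence
equicontinuous, and it suffices to prove convergence on the dense set of smooth compactly
supported `g`. Lipschitz functions are absolutely continuous, so integration by parts turns
`∫ f_n' g` into `-∫ f_n g'`, which converges by dominated convergence: the `f_n` are uniformly
bounded on compact sets because `f_n 0` converges.
-/

open MeasureTheory Filter Topology Set
open scoped NNReal ENNReal ContDiff

lemma LipschitzWith.of_tendsto {α β ι : Type*} [PseudoEMetricSpace α] [PseudoEMetricSpace β]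
    {l : Filter ι} [l.NeBot] {K : ℝ≥0} {F : ι → α → β} {f : α → β}
    (hF : ∀ i, LipschitzWith K (F i)) (h : ∀ x, Tendsto (F · x) l (𝓝 (f x))) :
    LipschitzWith K f :=
  (isClosed_setOfPred_lipschitzWith K).mem_of_tendsto (tendsto_pi_nhds.2 h) (.of_forall hF)

theorem MeasureTheory.Lp.tendsto_of_tendsto_hasCompactSupport_contDiff
    {E F G ι : Type*} [NormedAddCommGroup E] [NormedSpace ℝ E] [FiniteDimensional ℝ E]
    [MeasurableSpace E] [BorelSpace E] [NormedAddCommGroup F] [NormedSpace ℝ F]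
    [UniformSpace G] {μ : Measure E} [IsFiniteMeasureOnCompacts μ] {p : ℝ≥0∞} (hp : p ≠ ⊤)
    [Fact (1 ≤ p)] {l : Filter ι} {T : ι → Lp F p μ → G} {T₀ : Lp F p μ → G}
    (hT : Equicontinuous T) (hT₀ : Continuous T₀)
    (h : ∀ u : Lp F p μ, ∀ g : E → F, u =ᵐ[μ] g → HasCompactSupport g → ContDiff ℝ ∞ g →
      Tendsto (T · u) l (𝓝 (T₀ u)))
    (u : Lp F p μ) : Tendsto (T · u) l (𝓝 (T₀ u)) :=
  (hT u).tendsto_of_mem_closure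
    (s := {v : Lp F p μ | ∃ g : E → F, v =ᵐ[μ] g ∧ HasCompactSupport g ∧ ContDiff ℝ ∞ g})
    ((hT₀.tendsto u).mono_left nhdsWithin_le_nhds) (fun v ⟨g, hvg, hgs, hg⟩ ↦ h v g hvg hgs hg)
    ((Lp.dense_hasCompactSupport_contDiff (F := F) (μ := μ) hp).closure_eq ▸ mem_univ u)

namespace LipschitzWith

variable {K : ℝ≥0} {φ : ℝ → ℝ}

lemma abs_deriv_le (hφ : LipschitzWith K φ) (x : ℝ) : |deriv φ x| ≤ K := by
  simpa using norm_deriv_le_of_lipschitz (𝕜 := ℝ) hφ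

lemma integrable_deriv_mul (hφ : LipschitzWith K φ) {g : ℝ → ℝ} (hg : Integrable g) :
    Integrable (fun x ↦ deriv φ x * g x) :=
  hg.bdd_mul (measurable_deriv φ).aestronglyMeasurable (.of_forall hφ.abs_deriv_le)

lemma lipschitzWith_integral_deriv_mul (hφ : LipschitzWith K φ) :
    LipschitzWith K (fun u : ℝ →₁[volume] ℝ ↦ ∫ x, deriv φ x * u x) := by
  refine .of_dist_le_mul fun u v ↦ ?_
  have hu := hφ.integrable_deriv_mul (L1.integrable_coeFn u)
  have hv := hφ.integrable_deriv_mul (L1.integrable_coeFn v)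
  calc dist (∫ x, deriv φ x * u x) (∫ x, deriv φ x * v x)
      = ‖∫ x, deriv φ x * (u x - v x)‖ := by
        rw [dist_eq_norm, ← integral_sub hu hv]
        simp only [mul_sub]
    _ ≤ ∫ x, K * dist (u x) (v x) := by
        have huv := ((L1.integrable_coeFn u).sub (L1.integrable_coeFn v)).norm.const_mul K
        refine norm_integral_le_of_norm_le (by simpa only [dist_eq_norm, Pi.sub_apply] using huv)
          (.of_forall fun x ↦ ?_)
        rw [norm_mul, Real.norm_eq_abs, ← dist_eq_norm]
        exact mul_le_mul_of_nonneg_right (hφ.abs_deriv_le x) dist_nonneg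
    _ = K * dist u v := by rw [integral_const_mul, L1.dist_eq_integral_dist]

lemma integral_deriv_mul_eq_neg_integral_mul_deriv (hφ : LipschitzWith K φ) {g : ℝ → ℝ}
    (hg : ContDiff ℝ 1 g) (hgs : HasCompactSupport g) :
    ∫ x, deriv φ x * g x = -∫ x, φ x * deriv g x := by
  obtain ⟨R, hR, hgR⟩ := hgs.exists_pos_le_norm
  obtain ⟨R', -, hg'R'⟩ := hgs.deriv.exists_pos_le_norm
  set r := max R R'
  have hr : -r ≤ r := neg_le_self (hR.le.trans (le_max_left _ _))
  have hvanish : ∀ x, r ≤ |x| → g x = 0 ∧ deriv g x = 0 := fun x hx ↦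
    ⟨hgR x (le_of_max_le_left hx), hg'R' x (le_of_max_le_right hx)⟩
  have hout : ∀ x ∉ Ioc (-r) r, r ≤ |x| := fun x hx ↦ by grind [le_abs']
  obtain ⟨L, hL⟩ := hg.lipschitzWith_of_hasCompactSupport hgs one_ne_zero
  have ibp := (hφ.lipschitzOnWith (s := uIcc (-r) r)).absolutelyContinuousOnInterval
    |>.integral_mul_deriv_eq_deriv_mul
      (hL.lipschitzOnWith (s := uIcc (-r) r)).absolutelyContinuousOnInterval
  rw [intervalIntegral.integral_of_le hr, intervalIntegral.integral_of_le hr,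
    setIntegral_eq_integral_of_forall_compl_eq_zero fun x hx ↦ by
      simp [(hvanish x (hout x hx)).2],
    setIntegral_eq_integral_of_forall_compl_eq_zero fun x hx ↦ by
      simp [(hvanish x (hout x hx)).1],
    (hvanish r (le_abs_self r)).1, (hvanish (-r) (by simp [le_abs_self])).1] at ibp
  linarith

end LipschitzWith

section PointwiseLimit

variable {K : ℝ≥0} {f : ℕ → ℝ → ℝ} {flim : ℝ → ℝ}

lemma tendsto_integral_mul_of_lipschitzWith (hlip : ∀ n, LipschitzWith K (f n))
    (hconv : ∀ x, Tendsto (fun n ↦ f n x) atTop (𝓝 (flim x)))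
    {ψ : ℝ → ℝ} (hψ : Continuous ψ) (hψs : HasCompactSupport ψ) :
    Tendsto (fun n ↦ ∫ x, f n x * ψ x) atTop (𝓝 (∫ x, flim x * ψ x)) := by
  obtain ⟨M, hM⟩ := isBounded_iff_forall_norm_le.1 (Metric.isBounded_range_of_tendsto _ (hconv 0))
  have hbound : ∀ n x, |f n x| ≤ M + K * |x| := fun n x ↦ by
    have hx := (hlip n).dist_le_mul x 0
    have h0 := hM _ (mem_range_self n)
    rw [Real.dist_eq, Real.dist_eq, sub_zero] at hx
    rw [Real.norm_eq_abs] at h0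
    linarith [abs_sub_abs_le_abs_sub (f n x) (f n 0)]
  refine tendsto_integral_of_dominated_convergence (fun x ↦ (M + K * |x|) * |ψ x|)
    (fun n ↦ ((hlip n).continuous.mul hψ).aestronglyMeasurable) ?_ (fun n ↦ .of_forall fun x ↦ ?_)
    (.of_forall fun x ↦ (hconv x).mul_const _)
  · exact (by fun_prop : Continuous _).integrable_of_hasCompactSupport hψs.norm.mul_left
  · rw [norm_mul, Real.norm_eq_abs, Real.norm_eq_abs]
    exact mul_le_mul_of_nonneg_right (hbound n x) (abs_nonneg _)

lemma tendsto_integral_deriv_mul_of_contDiff (hlip : ∀ n, LipschitzWith K (f n))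
    (hconv : ∀ x, Tendsto (fun n ↦ f n x) atTop (𝓝 (flim x)))
    {g : ℝ → ℝ} (hg : ContDiff ℝ 1 g) (hgs : HasCompactSupport g) :
    Tendsto (fun n ↦ ∫ x, deriv (f n) x * g x) atTop (𝓝 (∫ x, deriv flim x * g x)) := by
  simp only [(hlip _).integral_deriv_mul_eq_neg_integral_mul_deriv hg hgs,
    (LipschitzWith.of_tendsto hlip hconv).integral_deriv_mul_eq_neg_integral_mul_deriv hg hgs]
  exact (tendsto_integral_mul_of_lipschitzWith hlip hconv (hg.continuous_deriv le_rfl)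
    hgs.deriv).neg

end PointwiseLimit

/-- If `f_n : ℝ → ℝ` are `1`-Lipschitz and converge pointwise to `f`, then `f` is
`1`-Lipschitz and the (Lebesgue-a.e. defined) derivatives `f_n′` converge to `f′` weak-*
against every finite signed measure absolutely continuous with respect to Lebesgue measure;
equivalently (writing the measure as `h·λ` with `h ∈ L¹(λ)`),
`∫ f_n′ h dλ → ∫ f′ h dλ` for every integrable `h`. -/
theorem lipschitz_pointwise_limit_deriv_weak_star
    (f : ℕ → ℝ → ℝ) (flim : ℝ → ℝ)
    (hlip : ∀ n, LipschitzWith 1 (f n))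
    (hconv : ∀ x : ℝ, Tendsto (fun n => f n x) atTop (𝓝 (flim x))) :
    LipschitzWith 1 flim ∧
      ∀ h : ℝ → ℝ, Integrable h volume →
        Tendsto (fun n => ∫ x, deriv (f n) x * h x) atTop
          (𝓝 (∫ x, deriv flim x * h x)) := by
  have hflim : LipschitzWith 1 flim := .of_tendsto hlip hconv
  refine ⟨hflim, fun h hh ↦ ?_⟩
  have hcongr {u v : ℝ → ℝ} (huv : u =ᵐ[volume] v) (φ : ℝ → ℝ) :
      ∫ x, deriv φ x * u x = ∫ x, deriv φ x * v x :=
    integral_congr_ae (EventuallyEq.rfl.mul huv)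
  simp only [← hcongr hh.coeFn_toL1]
  refine Lp.tendsto_of_tendsto_hasCompactSupport_contDiff ENNReal.one_ne_top
    (LipschitzWith.uniformEquicontinuous _ 1 fun n ↦
      (hlip n).lipschitzWith_integral_deriv_mul).equicontinuous
    hflim.lipschitzWith_integral_deriv_mul.continuous (fun u g hug hgs hg ↦ ?_) _
  simpa only [hcongr hug] using
    tendsto_integral_deriv_mul_of_contDiff hlip hconv (hg.of_le (by simp)) hgs
end

section
/- Let ν be a Borel probability measure on ℝ and let 0 < β < ∞. Define θ_ν(M, β) := inf { (∫ g(x)² ν(dx))^{1/2} : g ∈ C¹(ℝ), Lip(g) ≤ 1, Lip(g′) ≤ β, ∫ g′(x) ν(dx) = M } (with the convention inf ∅ = +∞). Then θ_ν(M, β) > 0 for every M > 0 if and only if ν has no isolated point masses, i.e., there do not exist x ∈ ℝ and δ > 0 with ν({y : |y − x| ≤ δ}) = ν({x}) > 0. -/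
/-!
If `x` is an isolated atom, a small multiple of `(y - x) φ(y)`, with `φ` a bump function supported
in the isolating ball, is admissible for `M = c ν{x}` and vanishes `ν`-a.e., so `θ_ν(M, β) = 0`.

Conversely, if `θ_ν(M, β) = 0`, take admissible `g_n` with `∫ g_n² dν ≤ t_n³`, `t_n → 0`.
By a reverse Markov inequality `g_n' ≥ M/2` on a set of mass `≥ M/2`, and by Chebyshev
`|g_n| ≤ t_n` off a set of mass `≤ t_n`, so the sets `C_n` where both hold have mass `≥ M/4`.
At `x ∈ C_n` we have `g_n' ≥ M/4` on the ball of radius `r = M/(4β)`, so `|g_n| ≥ t_n` on the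
annulus `8 t_n / M ≤ |y - x| ≤ r`, which therefore has mass `≤ t_n`. A point of `limsup C_n` in
the support of `ν` is then an atom whose punctured `r`-ball is `ν`-null.
-/

open MeasureTheory Metric Set Filter
open scoped ENNReal NNReal Topology

section MeasureLemmas

variable {α : Type*} [MeasurableSpace α] {μ : Measure α}

lemma ofReal_integral_sub_le_measure [IsProbabilityMeasure μ] {f : α → ℝ} (hf : Integrable f μ)
    (hf_le : ∀ x, f x ≤ 1) {a : ℝ} (ha : 0 ≤ a) :
    ENNReal.ofReal (∫ x, f x ∂μ - a) ≤ μ {x | a ≤ f x} := by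
  have hs : NullMeasurableSet {x | a ≤ f x} μ :=
    nullMeasurableSet_le aemeasurable_const hf.1.aemeasurable
  refine ENNReal.ofReal_le_of_le_toReal ?_
  calc ∫ x, f x ∂μ - a = ∫ x, (f x - a) ∂μ := by simp [integral_sub hf (integrable_const a)]
    _ ≤ ∫ x, {x | a ≤ f x}.indicator 1 x ∂μ := by
        refine integral_mono (hf.sub (integrable_const a)) ((integrable_const 1).indicator₀ hs)
          fun x => ?_
        by_cases hx : a ≤ f x
        · rw [indicator_of_mem (show x ∈ {x | a ≤ f x} from hx), Pi.one_apply]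
          linarith [hf_le x]
        · rw [indicator_of_notMem (show x ∉ {x | a ≤ f x} from hx)]
          linarith [not_le.1 hx]
    _ = μ.real {x | a ≤ f x} := by simp [integral_indicator₀ hs]

lemma measure_le_abs_le_of_lintegral_sq_le {f : α → ℝ} (hf : AEMeasurable f μ) {t : ℝ} (ht : 0 < t)
    (h : ∫⁻ x, ENNReal.ofReal (f x ^ 2) ∂μ ≤ ENNReal.ofReal (t ^ 3)) :
    μ {x | t ≤ |f x|} ≤ ENNReal.ofReal t := by
  have hsub : {x | t ≤ |f x|} ⊆ {x | ENNReal.ofReal (t ^ 2) ≤ ENNReal.ofReal (f x ^ 2)} :=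
    fun x hx => ENNReal.ofReal_le_ofReal (sq_abs (f x) ▸ pow_le_pow_left₀ ht.le hx 2)
  have hmul :
      ENNReal.ofReal (t ^ 2) * μ {x | t ≤ |f x|} ≤ ENNReal.ofReal (t ^ 2) * ENNReal.ofReal t :=
    calc ENNReal.ofReal (t ^ 2) * μ {x | t ≤ |f x|}
        ≤ ENNReal.ofReal (t ^ 2) * μ {x | ENNReal.ofReal (t ^ 2) ≤ ENNReal.ofReal (f x ^ 2)} := by
          gcongr
      _ ≤ ∫⁻ x, ENNReal.ofReal (f x ^ 2) ∂μ :=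
          mul_meas_ge_le_lintegral₀ (hf.pow_const 2).ennreal_ofReal _
      _ ≤ ENNReal.ofReal (t ^ 3) := h
      _ = ENNReal.ofReal (t ^ 2) * ENNReal.ofReal t := by
          rw [← ENNReal.ofReal_mul (by positivity)]; ring_nf
  exact (ENNReal.mul_le_mul_iff_right (by positivity) ENNReal.ofReal_ne_top).1 hmul

lemma le_measure_limsup_atTop [IsFiniteMeasure μ] {s : ℕ → Set α}
    (hs : ∀ n, NullMeasurableSet (s n) μ) {ε : ℝ≥0∞} (h : ∀ n, ε ≤ μ (s n)) :
    ε ≤ μ (limsup s atTop) := by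
  rw [limsup_eq_iInf_iSup_of_nat]
  simp only [iSup_eq_iUnion, iInf_eq_iInter]
  rw [Antitone.measure_iInter]
  · exact le_iInf fun n =>
      (h n).trans (measure_mono (le_iSup₂ (f := fun i (_ : i ≥ n) => s i) n le_rfl))
  · exact fun m n hmn => biSup_mono fun i hi => hmn.trans hi
  · exact fun n => .iUnion fun i => .iUnion fun _ => hs i
  · exact ⟨0, measure_ne_top _ _⟩

lemma ae_eq_indicator_singleton {β : Type*} [Zero β] {s : Set α} {x : α} {f : α → β}
    (hμ : μ (s \ {x}) = 0) (hf : ∀ y ∉ s, f y = 0) :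
    f =ᵐ[μ] ({x} : Set α).indicator fun _ => f x := by
  filter_upwards [measure_eq_zero_iff_ae_notMem.1 hμ] with y hy
  by_cases hyx : y = x
  · simp [hyx]
  · rw [indicator_of_notMem (show y ∉ ({x} : Set α) from hyx), hf y fun hys => hy ⟨hys, hyx⟩]

end MeasureLemmas

lemma measure_closedBall_diff_singleton_eq_zero {X : Type*} [MetricSpace X] [MeasurableSpace X]
    {μ : Measure X} {x : X} {r : ℝ} {s : ℕ → ℝ} {ε : ℕ → ℝ≥0∞}
    (hs : Tendsto s atTop (𝓝 0)) (hε : Tendsto ε atTop (𝓝 0))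
    (h : ∃ᶠ n in atTop, μ {y | s n ≤ dist y x ∧ dist y x ≤ r} ≤ ε n) :
    μ (closedBall x r \ {x}) = 0 := by
  have hannulus : ∀ σ > 0, μ {y | σ ≤ dist y x ∧ dist y x ≤ r} = 0 := by
    intro σ hσ
    refine nonpos_iff_eq_zero.1 (ge_of_tendsto_of_frequently hε ?_)
    refine (h.and_eventually (hs.eventually (ge_mem_nhds hσ))).mono fun n hn => ?_
    have hsub : {y | σ ≤ dist y x ∧ dist y x ≤ r} ⊆ {y | s n ≤ dist y x ∧ dist y x ≤ r} :=
      fun y hy => ⟨hn.2.trans hy.1, hy.2⟩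
    exact (measure_mono hsub).trans hn.1
  refine measure_mono_null (fun y hy => ?_)
    (measure_iUnion_null fun n : ℕ => hannulus (1 / (n + 1)) Nat.one_div_pos_of_nat)
  obtain ⟨n, hn⟩ := exists_nat_one_div_lt (dist_pos.2 hy.2)
  exact mem_iUnion.2 ⟨n, hn.le, hy.1⟩

lemma mul_dist_le_dist_of_le_deriv {g : ℝ → ℝ} (hg : Differentiable ℝ g) {x r m : ℝ}
    (hm : ∀ z ∈ closedBall x r, m ≤ deriv g z) {y : ℝ} (hy : y ∈ closedBall x r) :
    m * dist y x ≤ dist (g y) (g x) := by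
  have hx : x ∈ closedBall x r := mem_closedBall_self (dist_nonneg.trans hy)
  have hmono := (convex_closedBall x r).mul_sub_le_image_sub_of_le_deriv hg.continuous.continuousOn
    hg.differentiableOn fun z hz => hm z (interior_subset hz)
  rw [Real.dist_eq, Real.dist_eq]
  rcases le_total x y with hxy | hyx
  · rw [abs_of_nonneg (sub_nonneg.2 hxy)]
    exact (hmono x hx y hy hxy).trans (le_abs_self _)
  · rw [abs_sub_comm, abs_of_nonneg (sub_nonneg.2 hyx), abs_sub_comm]
    exact (hmono y hy x hx hyx).trans (le_abs_self _)

lemma annulus_subset_setOf_le_abs {g : ℝ → ℝ} {β : ℝ≥0} {M t x : ℝ} (hg : Differentiable ℝ g)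
    (hg' : LipschitzWith β (deriv g)) (hβ : 0 < β) (hM : 0 < M) (hx : M / 2 ≤ deriv g x)
    (hgx : |g x| ≤ t) :
    {y | 8 * t / M ≤ dist y x ∧ dist y x ≤ M / (4 * β)} ⊆ {y | t ≤ |g y|} := by
  rintro y ⟨hy_ge, hy_le⟩
  have hderiv : ∀ z ∈ closedBall x (M / (4 * β)), M / 4 ≤ deriv g z := by
    intro z hz
    have hlip : dist (deriv g z) (deriv g x) ≤ β * (M / (4 * β)) :=
      (hg'.dist_le_mul z x).trans (by gcongr; exact hz)
    rw [Real.dist_eq] at hlip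
    have : (β : ℝ) * (M / (4 * β)) = M / 4 := by field_simp
    linarith [neg_abs_le (deriv g z - deriv g x)]
  have hgrowth := mul_dist_le_dist_of_le_deriv hg hderiv hy_le
  have : 2 * t ≤ M / 4 * dist y x := by
    calc 2 * t = M / 4 * (8 * t / M) := by field_simp; ring
      _ ≤ M / 4 * dist y x := by gcongr
  have htri : dist (g y) (g x) ≤ |g y| + |g x| := (Real.dist_eq _ _).le.trans (abs_sub _ _)
  show t ≤ |g y|
  linarith

lemma exists_pos_lipschitzWith_const_mul {f : ℝ → ℝ} (hf : ContDiff ℝ 2 f)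
    (hcs : HasCompactSupport f) {β : ℝ≥0} (hβ : 0 < β) :
    ∃ c : ℝ≥0, 0 < c ∧ LipschitzWith 1 (fun x => (c : ℝ) * f x) ∧
      LipschitzWith β (deriv fun x => (c : ℝ) * f x) := by
  have hf' : ContDiff ℝ 1 (deriv f) := (contDiff_succ_iff_deriv (n := 1)).1 hf |>.2.2
  obtain ⟨K₁, hK₁⟩ := hf.lipschitzWith_of_hasCompactSupport hcs two_ne_zero
  obtain ⟨K₂, hK₂⟩ := hf'.lipschitzWith_of_hasCompactSupport hcs.deriv one_ne_zero
  set c : ℝ≥0 := min (K₁ + 1)⁻¹ (β / (K₂ + 1))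
  have hc : 0 < c := lt_min (by positivity) (by positivity)
  have hscale : ∀ {K L : ℝ≥0} {h : ℝ → ℝ}, LipschitzWith K h → c ≤ L / (K + 1) →
      LipschitzWith L (fun x => (c : ℝ) * h x) := by
    intro K L h hh hcL
    refine ((lipschitzWith_smul (c : ℝ)).comp hh).weaken ?_
    rw [NNReal.nnnorm_eq]
    calc c * K ≤ L / (K + 1) * (K + 1) := by gcongr; exact le_self_add
      _ = L := div_mul_cancel₀ _ (by positivity)
  refine ⟨c, hc, hscale hK₁ (by rw [one_div]; exact min_le_left _ _), ?_⟩
  rw [deriv_const_mul_field']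
  exact hscale hK₂ (min_le_right _ _)

lemma exists_contDiff_tsupport_subset_deriv_eq_one (x : ℝ) {δ : ℝ} (hδ : 0 < δ) :
    ∃ f : ℝ → ℝ, ContDiff ℝ 2 f ∧ tsupport f ⊆ closedBall x δ ∧ f x = 0 ∧ deriv f x = 1 := by
  let φ : ContDiffBump x := ⟨δ / 2, δ, half_pos hδ, half_lt_self hδ⟩
  refine ⟨fun y => (y - x) * φ y, (contDiff_id.sub contDiff_const).mul φ.contDiff,
    tsupport_mul_subset_right.trans φ.tsupport_eq.subset, by simp, ?_⟩
  have hφx : φ x = 1 := φ.one_of_mem_closedBall (mem_closedBall_self φ.rIn_pos.le)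
  have hφ : HasDerivAt φ (deriv φ x) x :=
    (φ.contDiff.differentiable (n := 1) one_ne_zero x).hasDerivAt
  have h : HasDerivAt (fun y => (y - x) * φ y) (1 * φ x + (x - x) * deriv φ x) x :=
    ((hasDerivAt_id' x).sub_const x).mul hφ
  simpa [hφx] using h.deriv

def IsTestFunction (ν : Measure ℝ) (β : ℝ≥0) (M : ℝ) (g : ℝ → ℝ) : Prop :=
  ContDiff ℝ 1 g ∧ LipschitzWith 1 g ∧ LipschitzWith β (deriv g) ∧ ∫ x, deriv g x ∂ν = M

noncomputable def theta (ν : Measure ℝ) (β : ℝ≥0) (M : ℝ) : ℝ≥0∞ :=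
  ⨅ g : {g : ℝ → ℝ // IsTestFunction ν β M g}, (∫⁻ x, ENNReal.ofReal (g.1 x ^ 2) ∂ν) ^ (1 / 2 : ℝ)

lemma theta_eq_zero_iff {ν : Measure ℝ} {β : ℝ≥0} {M : ℝ} :
    theta ν β M = 0 ↔
      ∀ ε > 0, ∃ g, IsTestFunction ν β M g ∧ ∫⁻ x, ENNReal.ofReal (g x ^ 2) ∂ν < ε := by
  rw [theta, ← bot_eq_zero, iInf_eq_bot]
  constructor
  · intro h ε hε
    obtain ⟨⟨g, hg⟩, hlt⟩ := h (ε ^ (1 / 2 : ℝ)) (ENNReal.rpow_pos_of_nonneg hε (by norm_num))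
    exact ⟨g, hg, (ENNReal.rpow_lt_rpow_iff (by norm_num)).1 hlt⟩
  · intro h b hb
    obtain ⟨g, hg, hlt⟩ := h (b ^ (2 : ℝ)) (ENNReal.rpow_pos_of_nonneg hb (by norm_num))
    refine ⟨⟨g, hg⟩, ?_⟩
    calc (∫⁻ x, ENNReal.ofReal (g x ^ 2) ∂ν) ^ (1 / 2 : ℝ) < (b ^ (2 : ℝ)) ^ (1 / 2 : ℝ) :=
          ENNReal.rpow_lt_rpow hlt (by norm_num)
      _ = b := by rw [← ENNReal.rpow_mul]; norm_num

namespace IsTestFunction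

variable {ν : Measure ℝ} {β : ℝ≥0} {M : ℝ} {g : ℝ → ℝ}

lemma differentiable (hg : IsTestFunction ν β M g) : Differentiable ℝ g :=
  hg.1.differentiable one_ne_zero

lemma abs_deriv_le_one (hg : IsTestFunction ν β M g) (x : ℝ) : |deriv g x| ≤ 1 := by
  simpa using norm_deriv_le_of_lipschitz (x₀ := x) hg.2.1

lemma integrable_deriv [IsFiniteMeasure ν] (hg : IsTestFunction ν β M g) : Integrable (deriv g) ν :=
  (integrable_const 1).mono' (measurable_deriv g).aestronglyMeasurable
    (ae_of_all _ fun x => by simpa using hg.abs_deriv_le_one x)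

lemma ofReal_div_four_le_measure [IsProbabilityMeasure ν] (hg : IsTestFunction ν β M g)
    (hM : 0 ≤ M) {t : ℝ} (ht : 0 < t) (htM : t ≤ M / 4)
    (hL : ∫⁻ x, ENNReal.ofReal (g x ^ 2) ∂ν ≤ ENNReal.ofReal (t ^ 3)) :
    ENNReal.ofReal (M / 4) ≤ ν {x | M / 2 ≤ deriv g x ∧ |g x| ≤ t} := by
  have hsplit : {x | M / 2 ≤ deriv g x} ⊆ {x | M / 2 ≤ deriv g x ∧ |g x| ≤ t} ∪ {x | t ≤ |g x|} :=
    fun x hx => (le_or_gt |g x| t).imp (⟨hx, ·⟩) le_of_lt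
  refine ENNReal.le_of_add_le_add_right (a := ENNReal.ofReal (M / 4)) ENNReal.ofReal_ne_top ?_
  calc ENNReal.ofReal (M / 4) + ENNReal.ofReal (M / 4)
      = ENNReal.ofReal (∫ x, deriv g x ∂ν - M / 2) := by
        rw [← ENNReal.ofReal_add (by positivity) (by positivity), hg.2.2.2]; ring_nf
    _ ≤ ν {x | M / 2 ≤ deriv g x} :=
        ofReal_integral_sub_le_measure hg.integrable_deriv
          (fun x => (le_abs_self _).trans (hg.abs_deriv_le_one x)) (by positivity)
    _ ≤ ν {x | M / 2 ≤ deriv g x ∧ |g x| ≤ t} + ν {x | t ≤ |g x|} :=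
        (measure_mono hsplit).trans (measure_union_le _ _)
    _ ≤ ν {x | M / 2 ≤ deriv g x ∧ |g x| ≤ t} + ENNReal.ofReal (M / 4) := by
        gcongr
        exact (measure_le_abs_le_of_lintegral_sq_le hg.1.continuous.aemeasurable ht hL).trans
          (ENNReal.ofReal_le_ofReal htM)

lemma measure_annulus_le (hg : IsTestFunction ν β M g) (hβ : 0 < β) (hM : 0 < M) {t x : ℝ}
    (ht : 0 < t) (hL : ∫⁻ x, ENNReal.ofReal (g x ^ 2) ∂ν ≤ ENNReal.ofReal (t ^ 3))
    (hx : M / 2 ≤ deriv g x) (hgx : |g x| ≤ t) :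
    ν {y | 8 * t / M ≤ dist y x ∧ dist y x ≤ M / (4 * β)} ≤ ENNReal.ofReal t :=
  (measure_mono (annulus_subset_setOf_le_abs hg.differentiable hg.2.2.1 hβ hM hx hgx)).trans
    (measure_le_abs_le_of_lintegral_sq_le hg.1.continuous.aemeasurable ht hL)

end IsTestFunction

lemma exists_isTestFunction_lintegral_sq_eq_zero {ν : Measure ℝ} [IsFiniteMeasure ν] {β : ℝ≥0}
    (hβ : 0 < β) {x δ : ℝ} (hδ : 0 < δ) (hball : ν (closedBall x δ) = ν {x}) (hx : 0 < ν {x}) :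
    ∃ M > 0, ∃ g, IsTestFunction ν β M g ∧ ∫⁻ y, ENNReal.ofReal (g y ^ 2) ∂ν = 0 := by
  obtain ⟨f, hf, hsupp, hfx, hf'x⟩ := exists_contDiff_tsupport_subset_deriv_eq_one x hδ
  obtain ⟨c, hc, hlip, hlip'⟩ := exists_pos_lipschitzWith_const_mul hf
    ((isCompact_closedBall x δ).of_isClosed_subset (isClosed_tsupport f) hsupp) hβ
  have hnull : ν (closedBall x δ \ {x}) = 0 := by
    rw [measure_sdiff (singleton_subset_iff.2 (mem_closedBall_self hδ.le))
      (measurableSet_singleton x).nullMeasurableSet (measure_ne_top ν _), hball, tsub_self]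
  have hvanish : ∀ y ∉ closedBall x δ, f y = 0 ∧ deriv f y = 0 := fun y hy =>
    ⟨image_eq_zero_of_notMem_tsupport fun h => hy (hsupp h),
      Function.notMem_support.1 fun h => hy (hsupp (support_deriv_subset h))⟩
  set g := fun y => (c : ℝ) * f y
  have hderiv : deriv g = fun y => c * deriv f y := deriv_const_mul_field' _
  refine ⟨c * ν.real {x}, mul_pos hc (ENNReal.toReal_pos hx.ne' (measure_ne_top ν _)), g,
    ⟨(contDiff_const.mul hf).of_le (by norm_num), hlip, hlip', ?_⟩, ?_⟩
  · have hae := ae_eq_indicator_singleton hnull (f := deriv g) fun y hy => by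
      simp [hderiv, (hvanish y hy).2]
    rw [integral_congr_ae hae, integral_indicator_const _ (measurableSet_singleton x)]
    simp [hderiv, hf'x, mul_comm]
  · have hae := ae_eq_indicator_singleton hnull (f := fun y => ENNReal.ofReal (g y ^ 2))
      fun y hy => by simp [g, (hvanish y hy).1]
    rw [lintegral_congr_ae hae]
    simp [g, hfx]

lemma exists_isolated_atom_of_theta_eq_zero {ν : Measure ℝ} [IsProbabilityMeasure ν] {β : ℝ≥0}
    {M : ℝ} (hβ : 0 < β) (hM : 0 < M) (hθ : theta ν β M = 0) :
    ∃ x δ, 0 < δ ∧ ν (closedBall x δ) = ν {x} ∧ 0 < ν {x} := by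
  set t : ℕ → ℝ := fun n => M / 4 * (1 / (n + 1))
  have ht_pos : ∀ n, 0 < t n := fun n => by positivity
  have ht_le : ∀ n, t n ≤ M / 4 := fun n =>
    mul_le_of_le_one_right (by positivity) (div_le_one_of_le₀ (by simp) (by positivity))
  have ht_lim : Tendsto t atTop (𝓝 0) := by
    have := tendsto_one_div_add_atTop_nhds_zero_nat.const_mul (M / 4)
    rwa [mul_zero] at this
  choose g hg hgL using fun n =>
    theta_eq_zero_iff.1 hθ (ENNReal.ofReal (t n ^ 3)) (by simpa using pow_pos (ht_pos n) 3)
  set C : ℕ → Set ℝ := fun n => {x | M / 2 ≤ deriv (g n) x ∧ |g n x| ≤ t n}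
  have hC_meas : ∀ n, NullMeasurableSet (C n) ν := fun n =>
    ((measurableSet_le (f := fun _ => M / 2) measurable_const (measurable_deriv _)).inter
      (measurableSet_le (hg n).1.continuous.abs.measurable measurable_const)).nullMeasurableSet
  have hC : ∀ n, ENNReal.ofReal (M / 4) ≤ ν (C n) := fun n =>
    (hg n).ofReal_div_four_le_measure hM.le (ht_pos n) (ht_le n) (hgL n).le
  obtain ⟨x, hx_limsup, hx_supp⟩ := Measure.nonempty_inter_support_of_pos <|
    (ENNReal.ofReal_pos.2 (by positivity)).trans_le (le_measure_limsup_atTop hC_meas hC)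
  set r := M / (4 * β)
  have hr : 0 < r := by positivity
  have hpunct : ν (closedBall x r \ {x}) = 0 := by
    refine measure_closedBall_diff_singleton_eq_zero (s := fun n => 8 * t n / M)
      (ε := fun n => ENNReal.ofReal (t n)) ?_ ?_ ?_
    · simpa using (ht_lim.const_mul 8).div_const M
    · simpa using ENNReal.tendsto_ofReal ht_lim
    · refine (mem_limsup_iff_frequently_mem.1 hx_limsup).mono fun n hn => ?_
      exact (hg n).measure_annulus_le hβ hM (ht_pos n) (hgL n).le hn.1 hn.2
  have hball : ν {x} = ν (closedBall x r) := measure_eq_measure_of_null_sdiff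
    (singleton_subset_iff.2 (mem_closedBall_self hr.le)) hpunct
  exact ⟨x, r, hr, hball.symm,
    hball ▸ (Measure.mem_support_iff_forall x).1 hx_supp _ (closedBall_mem_nhds x hr)⟩

/-- Aizenman–Wehr positivity criterion: for a Borel probability measure `ν` on `ℝ` and
`0 < β < ∞`, the quantity
`θ_ν(M,β) = inf { (∫ g² dν)^{1/2} : g ∈ C¹, Lip(g) ≤ 1, Lip(g′) ≤ β, ∫ g′ dν = M }`
(`inf ∅ = ∞`) is positive for every `M > 0` if and only if `ν` has no isolated point
masses.  (The squared integral is taken as a lower Lebesgue integral, so that it is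
meaningful, possibly infinite, for every admissible `g`.) -/
theorem theta_pos_iff_no_isolated_point_mass
    (ν : Measure ℝ) [IsProbabilityMeasure ν] (β : ℝ≥0) (hβ : 0 < β) :
    (∀ M : ℝ, 0 < M →
      0 < ⨅ g : {g : ℝ → ℝ // ContDiff ℝ 1 g ∧ LipschitzWith 1 g ∧
              LipschitzWith β (deriv g) ∧ (∫ x, deriv g x ∂ν) = M},
            (∫⁻ x, ENNReal.ofReal ((g.1 x) ^ 2) ∂ν) ^ (1 / 2 : ℝ)) ↔
      ¬∃ (x : ℝ) (δ : ℝ), 0 < δ ∧ ν {y : ℝ | |y - x| ≤ δ} = ν {x} ∧ 0 < ν {x} := by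
  change (∀ M : ℝ, 0 < M → 0 < theta ν β M) ↔
    ¬∃ x δ, 0 < δ ∧ ν (closedBall x δ) = ν {x} ∧ 0 < ν {x}
  refine ⟨fun hpos ⟨x, δ, hδ, hball, hx⟩ => ?_, fun hno M hM => ?_⟩
  · obtain ⟨M, hM, g, hg, hg0⟩ := exists_isTestFunction_lintegral_sq_eq_zero hβ hδ hball hx
    exact (hpos M hM).ne' (theta_eq_zero_iff.2 fun ε hε => ⟨g, hg, hg0 ▸ hε⟩)
  · exact pos_iff_ne_zero.2 fun hθ => hno (exists_isolated_atom_of_theta_eq_zero hβ hM hθ)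
end

section
/- Let ν be a Borel probability measure on ℝ and let 0 < β < ∞. Define γ_ν(M, β) := inf { (∫ g(x)² ν(dx))^{1/2} : g ∈ C¹(ℝ), Lip(g) ≤ 1, Lip(g′) ≤ β, g′(x) ≥ 0 for all x, ∫ g′(x) ν(dx) = M } (with the convention inf ∅ = +∞). Then γ_ν(M, β) > 0 for every M > 0 if and only if ν is not concentrated at a single point, i.e., ν is not a Dirac measure. -/
open MeasureTheory Set
open scoped ENNReal NNReal

/-!
If `ν = δₓ`, the function `t ↦ t - x` is admissible for `M = 1` and vanishes `ν`-a.e., so the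
infimum is `0`.

Otherwise the support of `ν` contains two points, which gives `a < b` with `ν (-∞, a] > 0` and
`ν [b, ∞) > 0`. An admissible `g` is monotone, so either `|g| ≥ c` on one of these half-lines, or
`|g a|, |g b| < c`. In the latter case, as `0 ≤ g' ≤ 1` and `∫ g' dν = M`, the set `{g' ≥ M / 2}`
has mass at least `M / 2`. At a point `y` of it left of the midpoint of `[a, b]`, the bound
`Lip(g') ≤ β` keeps `g' ≥ M / 4` on `[y, y + r]` with `y + r ≤ b`, whence
`g y ≤ g b - M r / 4 < -c` for `c = M r / 8`; symmetrically on the right. In every case `∫ g² dν`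
is bounded below by `c²` times a positive mass independent of `g`.
-/

section Support

variable {X : Type*} [TopologicalSpace X] [MeasurableSpace X] {ν : Measure X}

lemma eq_dirac_of_support_subset_singleton [HereditarilyLindelofSpace X]
    [MeasurableSingletonClass X] [IsProbabilityMeasure ν] {x : X}
    (h : ν.support ⊆ {x}) : ν = Measure.dirac x := by
  have hcompl : ν {x}ᶜ = 0 := measure_mono_null (compl_subset_compl.2 h) ν.measure_compl_support
  ext s hs
  rw [Measure.dirac_apply' x hs]
  by_cases hxs : x ∈ s
  · rw [indicator_of_mem hxs, Pi.one_apply, ← prob_compl_eq_zero_iff hs]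
    exact measure_mono_null (compl_subset_compl.2 (singleton_subset_iff.2 hxs)) hcompl
  · rw [indicator_of_notMem hxs]
    exact measure_mono_null (subset_compl_singleton_iff.2 hxs) hcompl

variable [LinearOrder X] [OrderTopology X] [DenselyOrdered X]

lemma exists_measure_Iic_pos_measure_Ici_pos_of_mem_support {x y : X} (hx : x ∈ ν.support)
    (hy : y ∈ ν.support) (hxy : x < y) :
    ∃ a b, a < b ∧ 0 < ν (Iic a) ∧ 0 < ν (Ici b) := by
  obtain ⟨a, hxa, hay⟩ := exists_between hxy
  obtain ⟨b, hab, hby⟩ := exists_between hay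
  refine ⟨a, b, hab, ?_, ?_⟩
  · exact ((Measure.mem_support_iff_forall x).1 hx _ (Iio_mem_nhds hxa)).trans_le
      (measure_mono Iio_subset_Iic_self)
  · exact ((Measure.mem_support_iff_forall y).1 hy _ (Ioi_mem_nhds hby)).trans_le
      (measure_mono Ioi_subset_Ici_self)

lemma exists_measure_Iic_pos_measure_Ici_pos [HereditarilyLindelofSpace X]
    [MeasurableSingletonClass X] [IsProbabilityMeasure ν]
    (h : ¬∃ x, ν = Measure.dirac x) :
    ∃ a b, a < b ∧ 0 < ν (Iic a) ∧ 0 < ν (Ici b) := by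
  obtain ⟨x, hx⟩ := Measure.nonempty_support (IsProbabilityMeasure.ne_zero ν)
  obtain ⟨y, hy, hyx⟩ : ∃ y ∈ ν.support, y ≠ x := by
    by_contra! hsub
    exact h ⟨x, eq_dirac_of_support_subset_singleton hsub⟩
  rcases hyx.lt_or_gt with hlt | hlt
  · exact exists_measure_Iic_pos_measure_Ici_pos_of_mem_support hy hx hlt
  · exact exists_measure_Iic_pos_measure_Ici_pos_of_mem_support hx hy hlt

end Support

section Calculus

variable {g : ℝ → ℝ} {K : ℝ≥0}

lemma mul_sub_le_sub_of_lipschitzWith_deriv (hg : Differentiable ℝ g)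
    (hgK : LipschitzWith K (deriv g)) {x y w m : ℝ} (hw : w ∈ Icc x y)
    (hm : m + K * (y - x) ≤ deriv g w) : m * (y - x) ≤ g y - g x := by
  have hxy : x ≤ y := hw.1.trans hw.2
  refine (convex_Icc x y).mul_sub_le_image_sub_of_le_deriv hg.continuous.continuousOn
    hg.differentiableOn (fun z hz => ?_) x (left_mem_Icc.2 hxy) y (right_mem_Icc.2 hxy) hxy
  have hz' := interior_subset hz
  have hdist : |deriv g w - deriv g z| ≤ K * (y - x) :=
    (hgK.dist_le_mul w z).trans (by
      gcongr
      rw [Real.dist_eq, abs_le]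
      constructor <;> linarith [hw.1, hw.2, hz'.1, hz'.2])
  linarith [le_abs_self (deriv g w - deriv g z)]

lemma le_abs_of_le_deriv (hg : Differentiable ℝ g) (hmono : Monotone g)
    (hgK : LipschitzWith K (deriv g)) {a b r m c y : ℝ} (hr : 0 ≤ r) (hrab : 2 * r ≤ b - a)
    (hKr : K * r ≤ m) (hc : 2 * c ≤ m * r) (ha : -c < g a) (hb : g b < c)
    (hy : 2 * m ≤ deriv g y) : c ≤ |g y| := by
  have hgab : g a ≤ g b := hmono (by linarith)
  rcases le_total y ((a + b) / 2) with hmid | hmid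
  · have hstep : m * r ≤ g (y + r) - g y := by
      simpa using mul_sub_le_sub_of_lipschitzWith_deriv hg hgK (x := y) (y := y + r) (w := y)
        ⟨le_rfl, by linarith⟩ (by linarith)
    have hgb : g (y + r) ≤ g b := hmono (by linarith)
    exact le_abs.2 (Or.inr (by linarith))
  · have hstep : m * r ≤ g y - g (y - r) := by
      simpa using mul_sub_le_sub_of_lipschitzWith_deriv hg hgK (x := y - r) (y := y) (w := y)
        ⟨by linarith, le_rfl⟩ (by linarith)
    have hga : g a ≤ g (y - r) := hmono (by linarith)
    exact le_abs.2 (Or.inl (by linarith))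

end Calculus

section Integrals

variable {α : Type*} [MeasurableSpace α] {μ : Measure α}

lemma integral_sub_le_measureReal_setOf_le [IsProbabilityMeasure μ] {f : α → ℝ}
    (hf : Measurable f) (hfi : Integrable f μ) (hf1 : ∀ x, f x ≤ 1) {t : ℝ} (ht : 0 ≤ t) :
    ∫ x, f x ∂μ - t ≤ μ.real {x | t ≤ f x} := by
  have hs : MeasurableSet {x | t ≤ f x} := measurableSet_le measurable_const hf
  have hle : ∀ x, f x ≤ {x | t ≤ f x}.indicator 1 x + t := by
    intro x
    by_cases hx : t ≤ f x
    · simp only [indicator_of_mem (show x ∈ {x | t ≤ f x} from hx), Pi.one_apply]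
      linarith [hf1 x]
    · simp [indicator_of_notMem (show x ∉ {x | t ≤ f x} from hx), le_of_not_ge hx]
  have hind : Integrable ({x | t ≤ f x}.indicator (1 : α → ℝ)) μ :=
    (integrable_const (1 : ℝ)).indicator hs
  have := calc ∫ x, f x ∂μ ≤ ∫ x, ({x | t ≤ f x}.indicator (1 : α → ℝ) x + t) ∂μ :=
        integral_mono hfi (hind.add (integrable_const t)) hle
    _ = μ.real {x | t ≤ f x} + t := by
        rw [integral_add hind (integrable_const t), integral_indicator_one hs, integral_const,
          probReal_univ, one_smul]
  linarith

lemma ofReal_sq_mul_le_lintegral_sq {g : α → ℝ} {s : Set α} (hs : MeasurableSet s) {c : ℝ}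
    (hc : 0 ≤ c) (h : ∀ x ∈ s, c ≤ |g x|) :
    ENNReal.ofReal (c ^ 2) * μ s ≤ ∫⁻ x, ENNReal.ofReal (g x ^ 2) ∂μ :=
  calc ENNReal.ofReal (c ^ 2) * μ s = ∫⁻ _ in s, ENNReal.ofReal (c ^ 2) ∂μ :=
        (setLIntegral_const s _).symm
    _ ≤ ∫⁻ x in s, ENNReal.ofReal (g x ^ 2) ∂μ :=
        setLIntegral_mono' hs fun x hx => ENNReal.ofReal_le_ofReal
          (by simpa only [sq_abs] using pow_le_pow_left₀ hc (h x hx) 2)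
    _ ≤ ∫⁻ x, ENNReal.ofReal (g x ^ 2) ∂μ := setLIntegral_le_lintegral _ _

end Integrals

lemma exists_measurableSet_le_abs (ν : Measure ℝ) [IsProbabilityMeasure ν] {K : ℝ≥0}
    {M a b r : ℝ} (hM : 0 < M) (hr : 0 ≤ r) (hKr : K * r ≤ M / 4) (hrab : 2 * r ≤ b - a)
    {g : ℝ → ℝ} (hg : Differentiable ℝ g) (hg1 : LipschitzWith 1 g)
    (hgK : LipschitzWith K (deriv g)) (hg0 : ∀ x, 0 ≤ deriv g x) (hgM : ∫ x, deriv g x ∂ν = M) :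
    ∃ s, MeasurableSet s ∧ min (ν (Iic a)) (min (ν (Ici b)) (ENNReal.ofReal (M / 2))) ≤ ν s ∧
      ∀ x ∈ s, M * r / 8 ≤ |g x| := by
  have hmono : Monotone g := monotone_of_deriv_nonneg hg hg0
  by_cases ha : g a ≤ -(M * r / 8)
  · refine ⟨Iic a, measurableSet_Iic, min_le_left _ _, fun x hx => ?_⟩
    exact le_abs.2 (Or.inr (by linarith [hmono (mem_Iic.1 hx)]))
  by_cases hb : M * r / 8 ≤ g b
  · refine ⟨Ici b, measurableSet_Ici, (min_le_right _ _).trans (min_le_left _ _), fun x hx => ?_⟩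
    exact le_abs.2 (Or.inl (hb.trans (hmono (mem_Ici.1 hx))))
  rw [not_le] at ha hb
  have hmeas : Measurable (deriv g) := hgK.continuous.measurable
  have hmass : M / 2 ≤ ν.real {x | M / 2 ≤ deriv g x} := by
    have h := integral_sub_le_measureReal_setOf_le hmeas
      (Integrable.of_integral_ne_zero (by rw [hgM]; exact hM.ne'))
      (fun x => (le_abs_self _).trans (by simpa using norm_deriv_le_of_lipschitz (x₀ := x) hg1))
      (by positivity : 0 ≤ M / 2)
    linarith
  refine ⟨{x | M / 2 ≤ deriv g x}, measurableSet_le measurable_const hmeas,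
    (min_le_right _ _).trans ((min_le_right _ _).trans
      (ENNReal.ofReal_le_of_le_toReal hmass)), fun y hy => ?_⟩
  exact le_abs_of_le_deriv hg hmono hgK hr hrab hKr (by linarith) ha hb
    (by linarith [show M / 2 ≤ deriv g y from hy])

lemma exists_pos_le_lintegral_sq (ν : Measure ℝ) [IsProbabilityMeasure ν] (K : ℝ≥0) {M a b : ℝ}
    (hM : 0 < M) (hab : a < b) (ha : 0 < ν (Iic a)) (hb : 0 < ν (Ici b)) :
    ∃ κ : ℝ≥0∞, 0 < κ ∧ ∀ g : ℝ → ℝ, Differentiable ℝ g → LipschitzWith 1 g →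
      LipschitzWith K (deriv g) → (∀ x, 0 ≤ deriv g x) → ∫ x, deriv g x ∂ν = M →
      κ ≤ ∫⁻ x, ENNReal.ofReal (g x ^ 2) ∂ν := by
  obtain ⟨r, hr, hKr, hrab⟩ : ∃ r : ℝ, 0 < r ∧ K * r ≤ M / 4 ∧ 2 * r ≤ b - a := by
    refine ⟨min (M / (4 * (K + 1))) ((b - a) / 2), lt_min (by positivity) (by linarith), ?_,
      by linarith [min_le_right (M / (4 * (K + 1))) ((b - a) / 2)]⟩
    calc (K : ℝ) * min (M / (4 * (K + 1))) ((b - a) / 2) ≤ (K + 1) * (M / (4 * (K + 1))) :=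
          mul_le_mul (by linarith) (min_le_left _ _) (by positivity) (by positivity)
      _ = M / 4 := by field_simp
  refine ⟨ENNReal.ofReal ((M * r / 8) ^ 2) *
      min (ν (Iic a)) (min (ν (Ici b)) (ENNReal.ofReal (M / 2))),
    ENNReal.mul_pos (ENNReal.ofReal_pos.2 (by positivity)).ne'
      (lt_min ha (lt_min hb (ENNReal.ofReal_pos.2 (by positivity)))).ne',
    fun g hg hg1 hgK hg0 hgM => ?_⟩
  obtain ⟨s, hs, hνs, hgs⟩ := exists_measurableSet_le_abs ν hM hr.le hKr hrab hg hg1 hgK hg0 hgM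
  exact (mul_le_mul_right hνs _).trans (ofReal_sq_mul_le_lintegral_sq hs (by positivity) hgs)

lemma admissible_sub_const_dirac (β : ℝ≥0) (x : ℝ) :
    ContDiff ℝ 1 (fun t : ℝ => t - x) ∧ LipschitzWith 1 (fun t : ℝ => t - x) ∧
      LipschitzWith β (deriv fun t : ℝ => t - x) ∧ (∀ y, 0 ≤ deriv (fun t : ℝ => t - x) y) ∧
      ∫ y, deriv (fun t : ℝ => t - x) y ∂Measure.dirac x = 1 := by
  have hderiv : deriv (fun t : ℝ => t - x) = fun _ => 1 := by
    ext t
    simp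
  refine ⟨contDiff_id.sub contDiff_const, (IsometryEquiv.subRight x).isometry.lipschitz, ?_, ?_,
    ?_⟩ <;> simp [hderiv, LipschitzWith.const']

theorem gamma_pos_iff_not_dirac_general
    (ν : Measure ℝ) [IsProbabilityMeasure ν] (β : ℝ≥0) :
    (∀ M : ℝ, 0 < M →
      0 < ⨅ g : {g : ℝ → ℝ // ContDiff ℝ 1 g ∧ LipschitzWith 1 g ∧
              LipschitzWith β (deriv g) ∧ (∀ x : ℝ, 0 ≤ deriv g x) ∧
              (∫ x, deriv g x ∂ν) = M},
            (∫⁻ x, ENNReal.ofReal ((g.1 x) ^ 2) ∂ν) ^ (1 / 2 : ℝ)) ↔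
      ¬∃ x : ℝ, ν = Measure.dirac x := by
  constructor
  · rintro h ⟨x, rfl⟩
    refine (h 1 one_pos).not_ge ((iInf_le _ ⟨_, admissible_sub_const_dirac β x⟩).trans_eq ?_)
    simp
  · intro hnd M hM
    obtain ⟨a, b, hab, ha, hb⟩ := exists_measure_Iic_pos_measure_Ici_pos hnd
    obtain ⟨κ, hκ, hle⟩ := exists_pos_le_lintegral_sq ν β hM hab ha hb
    refine (ENNReal.rpow_pos_of_nonneg hκ (by norm_num : (0 : ℝ) ≤ 1 / 2)).trans_le
      (le_iInf fun g => ?_)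
    obtain ⟨g, hg, hg1, hgβ, hg0, hgM⟩ := g
    exact ENNReal.rpow_le_rpow (hle g (hg.differentiable one_ne_zero) hg1 hgβ hg0 hgM)
      (by norm_num)

/-- Aizenman–Wehr positivity criterion (monotone version): for a Borel probability measure
`ν` on `ℝ` and `0 < β < ∞`, the quantity
`γ_ν(M,β) = inf { (∫ g² dν)^{1/2} : g ∈ C¹, Lip(g) ≤ 1, Lip(g′) ≤ β, g′ ≥ 0, ∫ g′ dν = M }`
(`inf ∅ = ∞`) is positive for every `M > 0` if and only if `ν` is not concentrated at a
single point, i.e. is not a Dirac measure.  (The squared integral is taken as a lower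
Lebesgue integral, so that it is meaningful, possibly infinite, for every admissible `g`.) -/
theorem gamma_pos_iff_not_dirac
    (ν : Measure ℝ) [IsProbabilityMeasure ν] (β : ℝ≥0) (hβ : 0 < β) :
    (∀ M : ℝ, 0 < M →
      0 < ⨅ g : {g : ℝ → ℝ // ContDiff ℝ 1 g ∧ LipschitzWith 1 g ∧
              LipschitzWith β (deriv g) ∧ (∀ x : ℝ, 0 ≤ deriv g x) ∧
              (∫ x, deriv g x ∂ν) = M},
            (∫⁻ x, ENNReal.ofReal ((g.1 x) ^ 2) ∂ν) ^ (1 / 2 : ℝ)) ↔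
      ¬∃ x : ℝ, ν = Measure.dirac x :=
  gamma_pos_iff_not_dirac_general ν β
end

section
/- Consider the generalized zero range process on the torus Λ = (ℤ/Lℤ)^d (d ≥ 1, L ≥ 2) with a finite symmetric set of directions E ⊆ Λ∖{0} (q ∈ E ⟺ −q ∈ E), rates α_q(ν, n) ≥ 0 defined for q ∈ E, integers ν ≥ 1, n ≥ 0, with α_q(ν, n) = 0 unless 1 ≤ ν ≤ n, and single-site weights p : ℕ → (0, ∞). Suppose there exist functions g_q : {1,2,…} → [0, ∞), q ∈ E, such that α_q(ν, n) = g_q(ν)·p(n − ν)/p(n) for all q ∈ E and all 1 ≤ ν ≤ n. Then the product measure P(n) = ∏_{i∈Λ} p(n_i) is stationary: for every configuration n : Λ → ℕ, ∑_{i∈Λ} ∑_{q∈E} ∑_{ν=1}^{n_i} [ α_{−q}(ν, n_{i+q} + ν) · P(n^{i,q,ν}) − α_q(ν, n_i) · P(n) ] = 0. -/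
/-!
Under the product-form rates, the gain term of a jump `i → i + q` of `ν` particles and
its loss term both reduce to a multiple of `p(n_i − ν)/p(n_i) · P(n)`: the rate
`α_{−q}(ν, n_{i+q} + ν)` carries the factor `p(n_{i+q})/p(n_{i+q} + ν)`, which exactly
cancels the change of weight at site `i + q`. The generator thus becomes
`∑_i ∑_ν (∑_{q∈E} (g_{−q}(ν) − g_q(ν))) · p(n_i − ν)/p(n_i) · P(n)`, and the inner sum vanishes
because `E` is symmetric.
-/

open Finset

/-- The configuration obtained from `n` by moving `ν` particles from site `i` to site
`i + q` on the torus. -/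
def updN {d L : ℕ} (n : (Fin d → ZMod L) → ℕ) (i q : Fin d → ZMod L) (ν : ℕ) :
    (Fin d → ZMod L) → ℕ :=
  fun j => if j = i then n i - ν else if j = i + q then n (i + q) + ν else n j

theorem Finset.sum_comp_neg_of_neg_mem {α M : Type*} [InvolutiveNeg α] [AddCommMonoid M]
    {E : Finset α} (hE : ∀ q ∈ E, -q ∈ E) (f : α → M) :
    ∑ q ∈ E, f (-q) = ∑ q ∈ E, f q :=
  sum_nbij' (fun q => -q) (fun q => -q) hE hE (fun q _ => neg_neg q) (fun q _ => neg_neg q)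
    (fun _ _ => rfl)

theorem Fintype.prod_comp_update_mul {ι α M : Type*} [Fintype ι] [DecidableEq ι]
    [CommMonoid M] (p : α → M) (n : ι → α) (i : ι) (a : α) :
    (∏ j, p (Function.update n i a j)) * p (n i) = p a * ∏ j, p (n j) := by
  have hcompl : ∏ j ∈ {i}ᶜ, p (Function.update n i a j) = ∏ j ∈ {i}ᶜ, p (n j) :=
    Finset.prod_congr rfl fun j hj => by rw [Function.update_of_ne (by simpa using hj)]
  rw [Fintype.prod_eq_mul_prod_compl i, Fintype.prod_eq_mul_prod_compl i (fun j => p (n j)),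
    Function.update_self, hcompl]
  ac_rfl

section

variable {d L : ℕ}

theorem updN_eq_update_update (n : (Fin d → ZMod L) → ℕ) {i q : Fin d → ZMod L} (hq : q ≠ 0)
    (ν : ℕ) :
    updN n i q ν = Function.update (Function.update n (i + q) (n (i + q) + ν)) i (n i - ν) := by
  have hiq : i ≠ i + q := fun h => hq (left_eq_add.mp h)
  funext j
  by_cases hji : j = i
  · subst hji; simp [updN]
  · by_cases hjq : j = i + q <;> simp [updN, Function.update, hji, hjq, hiq.symm]

variable [NeZero L]

theorem prod_updN_mul {M : Type*} [CommMonoid M] (p : ℕ → M) (n : (Fin d → ZMod L) → ℕ)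
    {i q : Fin d → ZMod L} (hq : q ≠ 0) (ν : ℕ) :
    (∏ j, p (updN n i q ν j)) * (p (n i) * p (n (i + q))) =
      p (n i - ν) * p (n (i + q) + ν) * ∏ j, p (n j) := by
  have hiq : i ≠ i + q := fun h => hq (left_eq_add.mp h)
  have hupd := Fintype.prod_comp_update_mul p (Function.update n (i + q) (n (i + q) + ν)) i
    (n i - ν)
  rw [Function.update_of_ne hiq] at hupd
  calc (∏ j, p (updN n i q ν j)) * (p (n i) * p (n (i + q)))
      = p (n i - ν) * ((∏ j, p (Function.update n (i + q) (n (i + q) + ν) j)) *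
          p (n (i + q))) := by
        rw [updN_eq_update_update n hq, ← mul_assoc, hupd, mul_assoc]
    _ = p (n i - ν) * p (n (i + q) + ν) * ∏ j, p (n j) := by
        rw [Fintype.prod_comp_update_mul, mul_assoc]

theorem gain_sub_loss_eq_of_product_form (p : ℕ → ℝ) (hp : ∀ m, 0 < p m)
    (n : (Fin d → ZMod L) → ℕ) {i q : Fin d → ZMod L} (hq : q ≠ 0) (ν : ℕ) (a b : ℝ) :
    a * p (n (i + q)) / p (n (i + q) + ν) * ∏ j, p (updN n i q ν j) -
        b * p (n i - ν) / p (n i) * ∏ j, p (n j) =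
      (a - b) * (p (n i - ν) / p (n i) * ∏ j, p (n j)) := by
  have hprod := prod_updN_mul p n (i := i) hq ν
  have hi := (hp (n i)).ne'
  have hiq := (hp (n (i + q))).ne'
  have hiqν := (hp (n (i + q) + ν)).ne'
  rw [← eq_div_iff_mul_eq (mul_ne_zero hi hiq)] at hprod
  rw [hprod]
  field_simp

end

theorem gzrp_product_measure_stationary_general (d L : ℕ) [NeZero L]
    (E : Finset (Fin d → ZMod L)) (hE0 : (0 : Fin d → ZMod L) ∉ E)
    (hEsym : ∀ q ∈ E, -q ∈ E)
    (α : (Fin d → ZMod L) → ℕ → ℕ → ℝ)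
    (p : ℕ → ℝ) (hp : ∀ n, 0 < p n)
    (g : (Fin d → ZMod L) → ℕ → ℝ)
    (hform : ∀ q ∈ E, ∀ ν n : ℕ, 1 ≤ ν → ν ≤ n → α q ν n = g q ν * p (n - ν) / p n) :
    ∀ n : (Fin d → ZMod L) → ℕ,
      ∑ i : Fin d → ZMod L, ∑ q ∈ E, ∑ ν ∈ Finset.Icc 1 (n i),
        (α (-q) ν (n (i + q) + ν) * ∏ j : Fin d → ZMod L, p (updN n i q ν j) -
          α q ν (n i) * ∏ j : Fin d → ZMod L, p (n j)) = 0 := by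
  intro n
  have hterm : ∀ i, ∀ q ∈ E, ∀ ν ∈ Icc 1 (n i),
      α (-q) ν (n (i + q) + ν) * ∏ j, p (updN n i q ν j) - α q ν (n i) * ∏ j, p (n j) =
        (g (-q) ν - g q ν) * (p (n i - ν) / p (n i) * ∏ j, p (n j)) := by
    intro i q hq ν hν
    obtain ⟨hν1, hνn⟩ := mem_Icc.mp hν
    rw [hform (-q) (hEsym q hq) ν _ hν1 (Nat.le_add_left ν _), Nat.add_sub_cancel,
      hform q hq ν _ hν1 hνn]
    exact gain_sub_loss_eq_of_product_form p hp n (ne_of_mem_of_not_mem hq hE0) ν _ _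
  calc _ = ∑ i, ∑ ν ∈ Icc 1 (n i), (∑ q ∈ E, (g (-q) ν - g q ν)) *
          (p (n i - ν) / p (n i) * ∏ j, p (n j)) := by
        refine sum_congr rfl fun i _ => ?_
        rw [sum_comm]
        refine sum_congr rfl fun ν hν => ?_
        rw [sum_mul]
        exact sum_congr rfl fun q hq => hterm i q hq ν hν
    _ = 0 := sum_eq_zero fun i _ => sum_eq_zero fun ν _ => by
        rw [sum_sub_distrib, sum_comp_neg_of_neg_mem hEsym (g · ν), sub_self, zero_mul]

/-- Sufficiency for the generalized zero range process: if the rates have the product form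
`α_q(ν,n) = g_q(ν) p(n−ν)/p(n)`, then the product measure `P(n) = ∏_i p(n_i)` is
stationary, i.e. the master-equation generator applied to `P` vanishes at every
configuration. -/
theorem gzrp_product_measure_stationary (d L : ℕ) (hd : 1 ≤ d) (hL : 2 ≤ L) [NeZero L]
    (E : Finset (Fin d → ZMod L)) (hE0 : (0 : Fin d → ZMod L) ∉ E)
    (hEsym : ∀ q ∈ E, -q ∈ E)
    (α : (Fin d → ZMod L) → ℕ → ℕ → ℝ)
    (hαnn : ∀ q ν n, 0 ≤ α q ν n)
    (hαzero : ∀ q ν n, ¬(1 ≤ ν ∧ ν ≤ n) → α q ν n = 0)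
    (p : ℕ → ℝ) (hp : ∀ n, 0 < p n)
    (g : (Fin d → ZMod L) → ℕ → ℝ)
    (hgnn : ∀ q ∈ E, ∀ ν : ℕ, 1 ≤ ν → 0 ≤ g q ν)
    (hform : ∀ q ∈ E, ∀ ν n : ℕ, 1 ≤ ν → ν ≤ n → α q ν n = g q ν * p (n - ν) / p n) :
    ∀ n : (Fin d → ZMod L) → ℕ,
      ∑ i : Fin d → ZMod L, ∑ q ∈ E, ∑ ν ∈ Finset.Icc 1 (n i),
        (α (-q) ν (n (i + q) + ν) * ∏ j : Fin d → ZMod L, p (updN n i q ν j) -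
          α q ν (n i) * ∏ j : Fin d → ZMod L, p (n j)) = 0 :=
  gzrp_product_measure_stationary_general d L E hE0 hEsym α p hp g hform
end

section
/- Consider the continuous-time mass transport process on the torus Λ = (ℤ/Lℤ)^d (d ≥ 1, L ≥ 2) with a finite symmetric set of directions E ⊆ Λ∖{0} (q ∈ E ⟺ −q ∈ E), measurable rates α_q : [0,∞)² → [0,∞) with α_q(μ, m) = 0 unless 0 ≤ μ ≤ m, and a measurable single-site density p : [0,∞) → (0,∞). Suppose there exist measurable integrable functions g_q : [0,∞) → [0,∞), q ∈ E, such that α_q(μ, m) = g_q(μ)·p(m − μ)/p(m) for all q ∈ E and all 0 ≤ μ ≤ m. Then the product density is stationary: for every configuration m : Λ → [0,∞), ∑_{i∈Λ} ∑_{q∈E} ∫_0^{m_i} α_q(μ, m_i) dμ · ∏_{j∈Λ} p(m_j) = ∑_{i∈Λ} ∑_{q∈E} ∫_0^{m_i} α_{−q}(μ, m_{i+q} + μ) · ∏_{j∈Λ} p(m^{i,q,μ}_j) dμ. -/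
open MeasureTheory

/-!
For fixed `i`, `q` and `μ`, the inflow term `α_{-q}(μ, m_{i+q} + μ) ∏_j p(m^{i,q,μ}_j)` equals the
outflow term `α_{-q}(μ, m_i) ∏_j p(m_j)`: with rates of product form both are
`g_{-q}(μ) p(m_i - μ) p(m_{i+q}) ∏_{j ≠ i, i+q} p(m_j)`. Integrating over `μ` and reindexing the
directions by `q ↦ -q`, which preserves the symmetric set `E`, turns the right side into the left.
-/

/-- The configuration obtained from `m` by moving mass `μ` from site `i` to site `i + q`
on the torus. -/
def updR {d L : ℕ} (m : (Fin d → ZMod L) → ℝ) (i q : Fin d → ZMod L) (μ : ℝ) :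
    (Fin d → ZMod L) → ℝ :=
  fun j => if j = i then m i - μ else if j = i + q then m (i + q) + μ else m j

def IsProductForm (a : ℝ → ℝ → ℝ) (g p : ℝ → ℝ) : Prop :=
  ∀ μ m : ℝ, 0 ≤ μ → μ ≤ m → a μ m = g μ * p (m - μ) / p m

theorem IsProductForm.detailed_balance {a : ℝ → ℝ → ℝ} {g p : ℝ → ℝ} (ha : IsProductForm a g p)
    (hp : ∀ m : ℝ, 0 ≤ m → 0 < p m) {μ x y : ℝ} (hμ : 0 ≤ μ) (hμx : μ ≤ x) (hy : 0 ≤ y) :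
    a μ (y + μ) * (p (x - μ) * p (y + μ)) = a μ x * (p x * p y) := by
  have hpx := hp x (hμ.trans hμx)
  have hpyμ := hp (y + μ) (by linarith)
  rw [ha μ (y + μ) hμ (by linarith), ha μ x hμ hμx, add_sub_cancel_right]
  field_simp

theorem prod_comp_updR_mul {d L : ℕ} [NeZero L] {M : Type*} [CommMonoid M] (f : ℝ → M)
    (m : (Fin d → ZMod L) → ℝ) (i : Fin d → ZMod L) {q : Fin d → ZMod L} (hq : q ≠ 0) (μ : ℝ) :
    (∏ j, f (updR m i q μ j)) * (f (m i) * f (m (i + q))) =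
      f (m i - μ) * f (m (i + q) + μ) * ∏ j, f (m j) := by
  have hi : i ≠ i + q := fun h => hq (left_eq_add.mp h)
  have hsplit (h : (Fin d → ZMod L) → M) :
      ∏ j, h j = h i * h (i + q) * ∏ j ∈ Finset.univ \ {i, i + q}, h j := by
    rw [← Finset.prod_sdiff (Finset.subset_univ {i, i + q}), Finset.prod_pair hi, mul_comm]
  have hrest : ∀ j ∈ Finset.univ \ {i, i + q}, f (updR m i q μ j) = f (m j) := by
    intro j hj
    simp only [Finset.mem_sdiff, Finset.mem_insert, Finset.mem_singleton, not_or] at hj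
    simp [updR, hj.2.1, hj.2.2]
  rw [hsplit (fun j => f (updR m i q μ j)), hsplit (fun j => f (m j)),
    Finset.prod_congr rfl hrest]
  simp only [updR, if_neg hi.symm]
  ac_rfl

theorem integral_rate_mul_prod_updR {d L : ℕ} [NeZero L] {a : ℝ → ℝ → ℝ} {g p : ℝ → ℝ}
    (ha : IsProductForm a g p) (hp : ∀ m : ℝ, 0 ≤ m → 0 < p m) {m : (Fin d → ZMod L) → ℝ}
    (hm : ∀ i, 0 ≤ m i) (i : Fin d → ZMod L) {q : Fin d → ZMod L} (hq : q ≠ 0) :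
    ∫ μ in (0 : ℝ)..(m i), a μ (m (i + q) + μ) * ∏ j, p (updR m i q μ j) =
      (∫ μ in (0 : ℝ)..(m i), a μ (m i)) * ∏ j, p (m j) := by
  rw [← intervalIntegral.integral_mul_const]
  refine intervalIntegral.integral_congr fun μ hμ => ?_
  rw [Set.uIcc_of_le (hm i)] at hμ
  have hcancel : 0 < p (m i) * p (m (i + q)) := mul_pos (hp _ (hm i)) (hp _ (hm (i + q)))
  refine mul_right_cancel₀ hcancel.ne' ?_
  calc a μ (m (i + q) + μ) * (∏ j, p (updR m i q μ j)) * (p (m i) * p (m (i + q)))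
      = a μ (m (i + q) + μ) * (p (m i - μ) * p (m (i + q) + μ)) * ∏ j, p (m j) := by
        rw [mul_assoc, prod_comp_updR_mul p m i hq μ]; ring
    _ = a μ (m i) * (p (m i) * p (m (i + q))) * ∏ j, p (m j) := by
        rw [ha.detailed_balance hp hμ.1 hμ.2 (hm (i + q))]
    _ = a μ (m i) * (∏ j, p (m j)) * (p (m i) * p (m (i + q))) := by ring

theorem mtp_product_density_stationary_general (d L : ℕ) [NeZero L]
    (E : Finset (Fin d → ZMod L)) (hE0 : (0 : Fin d → ZMod L) ∉ E)
    (hEsym : ∀ q ∈ E, -q ∈ E)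
    (α : (Fin d → ZMod L) → ℝ → ℝ → ℝ)
    (p : ℝ → ℝ) (hp : ∀ m : ℝ, 0 ≤ m → 0 < p m)
    (g : (Fin d → ZMod L) → ℝ → ℝ)
    (hform : ∀ q ∈ E, ∀ μ m : ℝ, 0 ≤ μ → μ ≤ m → α q μ m = g q μ * p (m - μ) / p m) :
    ∀ m : (Fin d → ZMod L) → ℝ, (∀ i, 0 ≤ m i) →
      ∑ i : Fin d → ZMod L, ∑ q ∈ E,
          (∫ μ in (0 : ℝ)..(m i), α q μ (m i)) * ∏ j : Fin d → ZMod L, p (m j) =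
        ∑ i : Fin d → ZMod L, ∑ q ∈ E,
          ∫ μ in (0 : ℝ)..(m i),
            α (-q) μ (m (i + q) + μ) * ∏ j : Fin d → ZMod L, p (updR m i q μ j) := by
  intro m hm
  refine Finset.sum_congr rfl fun i _ => ?_
  have hneg : ∀ q, q ∈ E ↔ -q ∈ E := fun q => ⟨hEsym q, fun h => neg_neg q ▸ hEsym (-q) h⟩
  calc ∑ q ∈ E, (∫ μ in (0 : ℝ)..(m i), α q μ (m i)) * ∏ j, p (m j)
      = ∑ q ∈ E, (∫ μ in (0 : ℝ)..(m i), α (-q) μ (m i)) * ∏ j, p (m j) :=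
        Finset.sum_equiv (Equiv.neg _) hneg fun q _ => by simp
    _ = _ := Finset.sum_congr rfl fun q hq =>
        (integral_rate_mul_prod_updR (hform (-q) ((hneg q).mp hq)) hp hm i
          (ne_of_mem_of_not_mem hq hE0)).symm

/-- Sufficiency for the continuous-time mass transport process: if the rates have the
product form `α_q(μ,m) = g_q(μ) p(m−μ)/p(m)`, then the product density `∏_i p(m_i)` is
stationary, i.e. the master-equation identity holds at every configuration. -/
theorem mtp_product_density_stationary (d L : ℕ) (hd : 1 ≤ d) (hL : 2 ≤ L) [NeZero L]
    (E : Finset (Fin d → ZMod L)) (hE0 : (0 : Fin d → ZMod L) ∉ E)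
    (hEsym : ∀ q ∈ E, -q ∈ E)
    (α : (Fin d → ZMod L) → ℝ → ℝ → ℝ)
    (hαmeas : ∀ q ∈ E, Measurable fun x : ℝ × ℝ => α q x.1 x.2)
    (hαnn : ∀ q (μ m : ℝ), 0 ≤ α q μ m)
    (hαzero : ∀ q (μ m : ℝ), ¬(0 ≤ μ ∧ μ ≤ m) → α q μ m = 0)
    (p : ℝ → ℝ) (hpmeas : Measurable p) (hp : ∀ m : ℝ, 0 ≤ m → 0 < p m)
    (g : (Fin d → ZMod L) → ℝ → ℝ)
    (hgmeas : ∀ q ∈ E, Measurable (g q))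
    (hgnn : ∀ q ∈ E, ∀ μ : ℝ, 0 ≤ μ → 0 ≤ g q μ)
    (hgint : ∀ q ∈ E, IntegrableOn (g q) (Set.Ici (0 : ℝ)) volume)
    (hform : ∀ q ∈ E, ∀ μ m : ℝ, 0 ≤ μ → μ ≤ m → α q μ m = g q μ * p (m - μ) / p m) :
    ∀ m : (Fin d → ZMod L) → ℝ, (∀ i, 0 ≤ m i) →
      ∑ i : Fin d → ZMod L, ∑ q ∈ E,
          (∫ μ in (0 : ℝ)..(m i), α q μ (m i)) * ∏ j : Fin d → ZMod L, p (m j) =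
        ∑ i : Fin d → ZMod L, ∑ q ∈ E,
          ∫ μ in (0 : ℝ)..(m i),
            α (-q) μ (m (i + q) + μ) * ∏ j : Fin d → ZMod L, p (updR m i q μ j) :=
  mtp_product_density_stationary_general d L E hE0 hEsym α p hp g hform
end
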